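/- Let φ = (√5 - 1)/2. Then Li_3(φ^2) = (4/5)*ζ(3) - (2/3)*(ln φ)^3 + (2/15)*π^2*ln φ, where Li_3(x) = ∑_{n=1}^∞ x^n/n^3 and ζ(3) = ∑_{n=1}^∞ 1/n^3. -/

import Mathlib

/-!
Two functional equations of the trilogarithm, each proved by differentiating the defining series
(`Li (m + 1)' x = Li m x / x`) and checking that the derivative of the difference vanishes.
Landen's identity
`Li₃ x + Li₃ (1 - x) + Li₃ (1 - 1/x) = ζ(3) + log³ x / 6 + π²/6 log x - log² x log (1 - x) / 2`
holds on `[1/2, 1]` (where `1 - 1/x` stays in the disc of convergence); its derivative vanishes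
by Euler's reflection formula and Landen's identity for `Li₂`, proved the same way.
The duplication formula `Li₃ x + Li₃ (-x) = Li₃ (x²) / 4` follows by splitting the series into
even and odd terms. At the golden ratio conjugate `φ` we have `1 - φ = φ²` and `1 - 1/φ = -φ`,
so Landen's identity reads `Li₃ φ + Li₃ (-φ) + Li₃ φ² = …`, and duplication turns the left side
into `5/4 Li₃ φ²`.
-/

open Real Finset

noncomputable def H (n : ℕ) : ℝ := ∑ k ∈ Finset.range n, 1 / ((k : ℝ) + 1)

noncomputable def H2 (n : ℕ) : ℝ := ∑ k ∈ Finset.range n, 1 / ((k : ℝ) + 1) ^ 2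

noncomputable def zeta11 (n : ℕ) : ℝ :=
  ∑ k ∈ Finset.range n, ∑ j ∈ Finset.range k, 1 / (((k : ℝ) + 1) * ((j : ℝ) + 1))

noncomputable def Li (m : ℕ) (x : ℝ) : ℝ := ∑' n : ℕ, x ^ (n + 1) / ((n : ℝ) + 1) ^ m

noncomputable def Li21 (x : ℝ) : ℝ := ∑' n : ℕ, x ^ (n + 1) * H n / ((n : ℝ) + 1) ^ 2

noncomputable def Li31 (x : ℝ) : ℝ := ∑' n : ℕ, x ^ (n + 1) * H n / ((n : ℝ) + 1) ^ 3

noncomputable def zeta3 : ℝ := ∑' n : ℕ, 1 / ((n : ℝ) + 1) ^ 3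

noncomputable def zeta31 : ℝ := ∑' n : ℕ, H n / ((n : ℝ) + 1) ^ 3

lemma abs_pow_div_succ_pow_le {x r : ℝ} (hx : |x| ≤ r) (j n : ℕ) {k m : ℕ} (hkm : k ≤ m) :
    |x ^ j / ((n : ℝ) + 1) ^ m| ≤ r ^ j / ((n : ℝ) + 1) ^ k := by
  have hn : (1 : ℝ) ≤ (n : ℝ) + 1 := le_add_of_nonneg_left n.cast_nonneg
  rw [abs_div, abs_pow, abs_pow, abs_of_pos (by positivity : (0 : ℝ) < (n : ℝ) + 1)]
  exact div_le_div₀ (pow_nonneg ((abs_nonneg x).trans hx) j)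
    (pow_le_pow_left₀ (abs_nonneg x) hx j) (by positivity) (pow_le_pow_right₀ hn hkm)

lemma summable_one_div_succ_sq : Summable fun n : ℕ => 1 / ((n : ℝ) + 1) ^ 2 := by
  simpa using (summable_nat_add_iff 1).mpr (Real.summable_one_div_nat_pow.mpr one_lt_two)

lemma summable_Li_of_abs_lt_one (m : ℕ) {x : ℝ} (hx : |x| < 1) :
    Summable fun n : ℕ => x ^ (n + 1) / ((n : ℝ) + 1) ^ m :=
  .of_norm_bounded ((summable_nat_add_iff 1).mpr (summable_geometric_of_lt_one (abs_nonneg x) hx))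
    fun n => by
      simpa only [Real.norm_eq_abs, pow_zero, div_one] using
        abs_pow_div_succ_pow_le le_rfl (n + 1) n (Nat.zero_le m)

lemma continuousOn_Li {m : ℕ} (hm : 2 ≤ m) : ContinuousOn (Li m) (Set.Icc (-1) 1) :=
  continuousOn_tsum (fun n => ((continuous_pow (n + 1)).div_const _).continuousOn)
    summable_one_div_succ_sq fun n y hy => by
      simpa only [Real.norm_eq_abs, one_pow] using abs_pow_div_succ_pow_le (abs_le.mpr hy) (n + 1) n hm

lemma Li_apply_zero (m : ℕ) : Li m 0 = 0 := by
  simp [Li]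

lemma Li_one_eq_neg_log {x : ℝ} (hx : |x| < 1) : Li 1 x = -log (1 - x) := by
  simpa [Li] using (Real.hasSum_pow_div_log_of_abs_lt_one hx).tsum_eq

lemma Li_two_one : Li 2 1 = π ^ 2 / 6 := by
  simpa [Li] using ((hasSum_nat_add_iff' 1).mpr hasSum_zeta_two).tsum_eq

lemma Li_three_one : Li 3 1 = zeta3 := by
  simp [Li, zeta3]

lemma hasDerivAt_Li_succ (m : ℕ) {x : ℝ} (hx0 : x ≠ 0) (hx : |x| < 1) :
    HasDerivAt (Li (m + 1)) (Li m x / x) x := by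
  obtain ⟨r, hxr, hr1⟩ := exists_between hx
  have hr0 : 0 < r := (abs_nonneg x).trans_lt hxr
  have hderiv := hasDerivAt_tsum_of_isPreconnected
    (g := fun (n : ℕ) (y : ℝ) => y ^ (n + 1) / ((n : ℝ) + 1) ^ (m + 1))
    (g' := fun (n : ℕ) (y : ℝ) => y ^ n / ((n : ℝ) + 1) ^ m)
    (summable_geometric_of_lt_one hr0.le hr1) isOpen_Ioo isPreconnected_Ioo
    (fun n y _ => by
      refine ((hasDerivAt_pow (n + 1) y).div_const _).congr_deriv ?_
      rw [Nat.add_sub_cancel, pow_succ]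
      push_cast
      field_simp)
    (fun n y hy => by
      simpa only [Real.norm_eq_abs, pow_zero, div_one] using
        abs_pow_div_succ_pow_le (abs_lt.mpr hy).le n n (Nat.zero_le m))
    (y₀ := 0) (by simp [hr0]) (by simp) (abs_lt.mp hxr)
  have hsum : ∑' n : ℕ, x ^ n / ((n : ℝ) + 1) ^ m = Li m x / x := by
    rw [Li, ← tsum_div_const]
    congr 1 with n
    field_simp
    ring
  exact hderiv.congr_deriv hsum

lemma Li_add_Li_neg (m : ℕ) {x : ℝ} (hx : |x| < 1) :
    Li m x + Li m (-x) = 2 * Li m (x ^ 2) / 2 ^ m := by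
  set f : ℕ → ℝ := fun n => x ^ (n + 1) / ((n : ℝ) + 1) ^ m + (-x) ^ (n + 1) / ((n : ℝ) + 1) ^ m
  have hf : HasSum f (Li m x + Li m (-x)) :=
    (summable_Li_of_abs_lt_one m hx).hasSum.add
      (summable_Li_of_abs_lt_one m (by rwa [abs_neg])).hasSum
  have heven : HasSum (fun k => f (2 * k)) 0 := by
    convert hasSum_zero with k
    simp only [f, (Odd.neg_pow ⟨k, rfl⟩ x : (-x) ^ (2 * k + 1) = _)]
    ring
  have hodd : HasSum (fun k => f (2 * k + 1)) (2 * Li m (x ^ 2) / 2 ^ m) := by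
    have hx2 : |x ^ 2| < 1 := by rw [abs_pow]; exact pow_lt_one₀ (abs_nonneg x) hx two_ne_zero
    have hterm (k : ℕ) : f (2 * k + 1) = 2 * ((x ^ 2) ^ (k + 1) / ((k : ℝ) + 1) ^ m) / 2 ^ m := by
      have hk : ((2 * k + 1 : ℕ) : ℝ) + 1 = 2 * ((k : ℝ) + 1) := by push_cast; ring
      simp only [f, hk, show 2 * k + 1 + 1 = 2 * (k + 1) by ring, pow_mul, neg_sq, mul_pow]
      field_simp
      ring
    simp_rw [hterm]
    exact ((summable_Li_of_abs_lt_one m hx2).hasSum.mul_left 2).div_const _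
  simpa using hf.unique (heven.even_add_odd hodd)

lemma eq_of_hasDerivAt_eq_zero {f : ℝ → ℝ} {a b : ℝ} (hab : a ≤ b)
    (hf : ContinuousOn f (Set.Icc a b)) (hd : ∀ y ∈ Set.Ioo a b, HasDerivAt f 0 y) : f a = f b := by
  rcases hab.eq_or_lt with rfl | hab
  · rfl
  obtain ⟨c, -, hc⟩ := exists_hasDerivAt_eq_slope f (fun _ => 0) hab hf hd
  rw [eq_comm, div_eq_zero_iff, sub_eq_zero, sub_eq_zero] at hc
  exact hc.resolve_right hab.ne' |>.symm

lemma continuousOn_log_mul_log_one_sub :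
    ContinuousOn (fun y => log y * log (1 - y)) (Set.Ioi 0) := by
  have hdslope : ContinuousOn (dslope log 1) (Set.Ioi 0) := fun y hy => by
    rcases eq_or_ne y 1 with rfl | hy1
    · exact (continuousAt_dslope_same.mpr (Real.differentiableAt_log one_ne_zero)).continuousWithinAt
    · exact ((continuousAt_dslope_of_ne hy1).mpr
        (Real.continuousAt_log (ne_of_gt hy))).continuousWithinAt
  refine ((hdslope.mul (Real.continuous_mul_log.comp (continuous_sub_left 1)).continuousOn).neg).congr
    fun y _ => ?_
  -- `log y = (y - 1) * dslope log 1 y` turns the product into `(1 - y) log (1 - y)`, continuous at `1`.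
  have h := sub_smul_dslope log 1 y
  rw [Real.log_one, sub_zero, smul_eq_mul] at h
  simp only [Pi.neg_apply, Pi.mul_apply, Function.comp_apply]
  rw [← h]
  ring

lemma continuousOn_Li_one_sub {m : ℕ} (hm : 2 ≤ m) :
    ContinuousOn (fun y => Li m (1 - y)) (Set.Icc 0 2) :=
  (continuousOn_Li hm).comp (continuous_sub_left 1).continuousOn fun y hy =>
    ⟨by linarith [hy.2], by linarith [hy.1]⟩

lemma continuousOn_Li_one_sub_inv {m : ℕ} (hm : 2 ≤ m) :
    ContinuousOn (fun y => Li m (1 - 1 / y)) (Set.Ici (1 / 2)) := by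
  refine (continuousOn_Li hm).comp
    (continuousOn_const.sub (continuousOn_const.div continuousOn_id fun y hy => ?_)) fun y hy => ?_
  · exact (lt_of_lt_of_le (by norm_num) hy).ne'
  · have hy0 : 0 < y := lt_of_lt_of_le (by norm_num) hy
    have h2 : 1 / y ≤ 2 := by rw [div_le_iff₀ hy0]; linarith [hy.out]
    exact ⟨by linarith, by linarith [one_div_pos.mpr hy0]⟩

lemma hasDerivAt_Li_succ_one_sub (m : ℕ) {y : ℝ} (hy : y ∈ Set.Ioo 0 1) :
    HasDerivAt (fun z => Li (m + 1) (1 - z)) (-(Li m (1 - y) / (1 - y))) y :=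
  (hasDerivAt_Li_succ m (by linarith [hy.2] : 1 - y ≠ 0)
    (abs_lt.mpr ⟨by linarith [hy.2], by linarith [hy.1]⟩)).comp_const_sub 1 y

lemma abs_one_sub_one_div_lt_one {y : ℝ} (hy : y ∈ Set.Ioo (1 / 2) 1) : |1 - 1 / y| < 1 := by
  obtain ⟨hy1, hy2⟩ := hy
  have hy0 : 0 < y := by linarith
  refine abs_lt.mpr ⟨?_, ?_⟩
  · rw [lt_sub_comm, div_lt_iff₀ hy0]; linarith
  · linarith [one_div_pos.mpr hy0]

lemma hasDerivAt_Li_succ_one_sub_inv (m : ℕ) {y : ℝ} (hy : y ∈ Set.Ioo (1 / 2) 1) :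
    HasDerivAt (fun z => Li (m + 1) (1 - 1 / z)) (Li m (1 - 1 / y) / ((y - 1) * y)) y := by
  have hy0 : 0 < y := by linarith [hy.1]
  have hinv : HasDerivAt (fun z : ℝ => 1 - 1 / z) (1 / y ^ 2) y := by
    simpa [one_div] using (hasDerivAt_inv hy0.ne').const_sub 1
  have hu : 1 - 1 / y < 0 := by rw [sub_neg, lt_div_iff₀ hy0]; linarith [hy.2]
  refine ((hasDerivAt_Li_succ m hu.ne (abs_one_sub_one_div_lt_one hy)).comp y hinv).congr_deriv ?_
  have hy1 : y - 1 ≠ 0 := by linarith [hy.2]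
  field_simp

lemma Li_two_reflection {x : ℝ} (hx : x ∈ Set.Ioc 0 1) :
    Li 2 x + Li 2 (1 - x) = π ^ 2 / 6 - log x * log (1 - x) := by
  have hconst := eq_of_hasDerivAt_eq_zero
    (f := fun y => Li 2 y + Li 2 (1 - y) + log y * log (1 - y)) hx.2 ?_ ?_
  · simp only [sub_self, Li_apply_zero, Li_two_one, Real.log_one, add_zero] at hconst
    linarith
  · have hsub : Set.Icc x 1 ⊆ Set.Icc (-1) 1 := Set.Icc_subset_Icc (by linarith [hx.1]) le_rfl
    exact (((continuousOn_Li le_rfl).mono hsub).add ((continuousOn_Li_one_sub le_rfl).mono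
      (Set.Icc_subset_Icc hx.1.le one_le_two))).add
      (continuousOn_log_mul_log_one_sub.mono fun y hy => hx.1.trans_le hy.1)
  · intro y hy
    have hy0 : y ∈ Set.Ioo 0 1 := ⟨hx.1.trans hy.1, hy.2⟩
    have h1y : 1 - y ≠ 0 := by linarith [hy0.2]
    have h := ((hasDerivAt_Li_succ 1 hy0.1.ne' (abs_lt.mpr ⟨by linarith [hy0.1], hy0.2⟩)).add
      (hasDerivAt_Li_succ_one_sub 1 hy0)).add
      ((Real.hasDerivAt_log hy0.1.ne').mul ((Real.hasDerivAt_log h1y).comp_const_sub 1 y))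
    refine h.congr_deriv ?_
    rw [Li_one_eq_neg_log (abs_lt.mpr ⟨by linarith [hy0.1], hy0.2⟩),
      Li_one_eq_neg_log (abs_lt.mpr ⟨by linarith [hy0.2], by linarith [hy0.1]⟩), sub_sub_cancel]
    field_simp
    ring

lemma Li_two_landen {x : ℝ} (hx : x ∈ Set.Icc (1 / 2) 1) :
    Li 2 (1 - 1 / x) + Li 2 (1 - x) = -(log x ^ 2 / 2) := by
  have hconst := eq_of_hasDerivAt_eq_zero
    (f := fun y => Li 2 (1 - 1 / y) + Li 2 (1 - y) + log y ^ 2 / 2) hx.2 ?_ ?_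
  · simp only [div_one, sub_self, Li_apply_zero, Real.log_one, add_zero, ne_eq,
      OfNat.ofNat_ne_zero, not_false_eq_true, zero_pow, zero_div] at hconst
    linarith
  · have hx0 : 0 < x := by linarith [hx.1]
    exact (((continuousOn_Li_one_sub_inv le_rfl).mono fun y hy => hx.1.trans hy.1).add
      ((continuousOn_Li_one_sub le_rfl).mono (Set.Icc_subset_Icc hx0.le one_le_two))).add
      (((Real.continuousOn_log.mono fun y hy => (hx0.trans_le hy.1).ne').pow 2).div_const 2)
  · intro y hy
    have hy' : y ∈ Set.Ioo (1 / 2) 1 := ⟨hx.1.trans_lt hy.1, hy.2⟩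
    have hy0 : y ∈ Set.Ioo 0 1 := ⟨by linarith [hy'.1], hy.2⟩
    have h := ((hasDerivAt_Li_succ_one_sub_inv 1 hy').add (hasDerivAt_Li_succ_one_sub 1 hy0)).add
      (((Real.hasDerivAt_log hy0.1.ne').pow 2).div_const 2)
    refine h.congr_deriv ?_
    rw [Li_one_eq_neg_log (abs_one_sub_one_div_lt_one hy'),
      Li_one_eq_neg_log (abs_lt.mpr ⟨by linarith [hy0.2], by linarith [hy0.1]⟩), sub_sub_cancel,
      sub_sub_cancel, one_div, Real.log_inv]
    have hy1 : y - 1 ≠ 0 := by linarith [hy0.2]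
    have h1y : 1 - y ≠ 0 := by linarith [hy0.2]
    have hy0' : y ≠ 0 := hy0.1.ne'
    field_simp
    ring

lemma Li_three_landen {x : ℝ} (hx : x ∈ Set.Icc (1 / 2) 1) :
    Li 3 x + Li 3 (1 - x) + Li 3 (1 - 1 / x) =
      zeta3 + log x ^ 3 / 6 + π ^ 2 / 6 * log x - log x ^ 2 * log (1 - x) / 2 := by
  have hx0 : 0 < x := by linarith [hx.1]
  have hconst := eq_of_hasDerivAt_eq_zero (f := fun y => Li 3 y + Li 3 (1 - y) + Li 3 (1 - 1 / y) -
    (log y ^ 3 / 6 + π ^ 2 / 6 * log y - log y ^ 2 * log (1 - y) / 2)) hx.2 ?_ ?_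
  · simp only [div_one, sub_self, Li_apply_zero, Li_three_one, Real.log_one, add_zero, ne_eq,
      OfNat.ofNat_ne_zero, not_false_eq_true, zero_pow, zero_div, mul_zero, zero_mul, sub_zero]
      at hconst
    linarith
  · have hlog : ContinuousOn log (Set.Icc x 1) :=
      Real.continuousOn_log.mono fun y hy => (hx0.trans_le hy.1).ne'
    have hloglog : ContinuousOn (fun y => log y ^ 2 * log (1 - y)) (Set.Icc x 1) :=
      (hlog.mul (continuousOn_log_mul_log_one_sub.mono fun y hy => hx0.trans_le hy.1)).congr
        fun y _ => by simp only [Pi.mul_apply]; ring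
    exact ((((continuousOn_Li (by norm_num)).mono
      (Set.Icc_subset_Icc (by linarith [hx.1]) le_rfl)).add
      ((continuousOn_Li_one_sub (by norm_num)).mono (Set.Icc_subset_Icc hx0.le one_le_two))).add
      ((continuousOn_Li_one_sub_inv (by norm_num)).mono fun y hy => hx.1.trans hy.1)).sub
      (((hlog.pow 3).div_const 6).add (hlog.const_smul (π ^ 2 / 6)) |>.sub (hloglog.div_const 2))
  · intro y hy
    have hy' : y ∈ Set.Ioo (1 / 2) 1 := ⟨hx.1.trans_lt hy.1, hy.2⟩
    have hy0 : y ∈ Set.Ioo 0 1 := ⟨by linarith [hy'.1], hy.2⟩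
    have h1y : 1 - y ≠ 0 := by linarith [hy0.2]
    have hlog := Real.hasDerivAt_log hy0.1.ne'
    have h := (((hasDerivAt_Li_succ 2 hy0.1.ne' (abs_lt.mpr ⟨by linarith [hy0.1], hy0.2⟩)).add
      (hasDerivAt_Li_succ_one_sub 2 hy0)).add (hasDerivAt_Li_succ_one_sub_inv 2 hy')).sub
      ((((hlog.pow 3).div_const 6).add (hlog.const_mul (π ^ 2 / 6))).sub
        (((hlog.pow 2).mul ((Real.hasDerivAt_log h1y).comp_const_sub 1 y)).div_const 2))
    refine h.congr_deriv ?_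
    have hreflection := Li_two_reflection ⟨hy0.1, hy0.2.le⟩
    have hlanden := Li_two_landen ⟨hy'.1.le, hy'.2.le⟩
    rw [show Li 2 (1 - 1 / y) = -(log y ^ 2 / 2) - Li 2 (1 - y) by linarith,
      show Li 2 (1 - y) = π ^ 2 / 6 - log y * log (1 - y) - Li 2 y by linarith]
    have hy1 : y - 1 ≠ 0 := by linarith [hy0.2]
    have hy0' : y ≠ 0 := hy0.1.ne'
    simp only [Pi.pow_apply]
    field_simp
    ring

lemma sqrt_five_sub_one_div_two_sq : ((√5 - 1) / 2) ^ 2 = 1 - (√5 - 1) / 2 := by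
  linear_combination Real.sq_sqrt (show (0 : ℝ) ≤ 5 by norm_num) / 4

theorem stmt9 :
    Li 3 ((((Real.sqrt 5 - 1) / 2)) ^ 2) =
      4 / 5 * zeta3 - 2 / 3 * Real.log (((Real.sqrt 5 - 1) / 2)) ^ 3 +
        2 / 15 * π ^ 2 * Real.log (((Real.sqrt 5 - 1) / 2)) := by
  set φ := (√5 - 1) / 2 with hφ_def
  have hsq : φ ^ 2 = 1 - φ := sqrt_five_sub_one_div_two_sq
  have hφ : φ ∈ Set.Ioo (1 / 2) 1 := by
    have h2 : 2 < √5 := by rw [Real.lt_sqrt] <;> norm_num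
    have h3 : √5 < 3 := by rw [Real.sqrt_lt'] <;> norm_num
    constructor <;> linarith
  clear_value φ
  have hinv : 1 - 1 / φ = -φ := by
    have : φ ≠ 0 := by linarith [hφ.1]
    field_simp
    linear_combination hsq
  have hlanden := Li_three_landen (Set.Ioo_subset_Icc_self hφ)
  rw [hinv, ← hsq, Real.log_pow] at hlanden
  have hduplication := Li_add_Li_neg 3 (abs_lt.mpr ⟨by linarith [hφ.1], hφ.2⟩)
  push_cast at hlanden
  linear_combination (4 / 5) * (hlanden - hduplication)
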